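/- Let G be a connected graph, T its trunk (the subgraph obtained by iteratively deleting leaves), and consider an acyclic edge orientation of G. If the orientations of the edges not in the trunk (limb edges) are changed arbitrarily, the resulting orientation is still acyclic and lies in the same reachability class under sink firing. -/

import Mathlib

/-- An edge orientation of a simple graph `G`: each edge gets exactly one direction. -/
structure EdgeOrientation {V : Type*} (G : SimpleGraph V) where
  dir : V → V → Prop
  dir_adj : ∀ u v, dir u v → G.Adj u v
  dir_total : ∀ u v, G.Adj u v → (dir u v ↔ ¬ dir v u)

namespace EdgeOrientation

variable {V : Type*} {G : SimpleGraph V}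

/-- An orientation is acyclic if it admits no directed cycle. -/
def Acyclic (o : EdgeOrientation G) : Prop :=
  ∀ v, ¬ Relation.TransGen o.dir v v

/-- A sink is a vertex with no outgoing edges. -/
def IsSink (o : EdgeOrientation G) (s : V) : Prop :=
  ∀ t, ¬ o.dir s t

/-- The direction relation obtained by reversing all edges incident to `s`. -/
def fireDir (s : V) (d : V → V → Prop) : V → V → Prop :=
  fun u v => ((u = s ∨ v = s) ∧ d v u) ∨ (¬ (u = s ∨ v = s) ∧ d u v)

/-- One sink-firing move on acyclic orientations. -/
def FireStep (o o' : EdgeOrientation G) : Prop :=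
  o.Acyclic ∧ ∃ s, o.IsSink s ∧ o'.dir = fireDir s o.dir

/-- Reachability by finite sequences of sink-firing moves. -/
def Reach (o o' : EdgeOrientation G) : Prop :=
  Relation.ReflTransGen FireStep o o'

/-- `FireSeq o l o'` : starting from `o`, firing the vertices in the list `l` in order
(each of which must be a sink of an acyclic orientation at its turn) yields `o'`. -/
def FireSeq : EdgeOrientation G → List V → EdgeOrientation G → Prop
  | o, [], o' => o = o'
  | o, s :: l, o' =>
      ∃ o₁ : EdgeOrientation G,
        o.Acyclic ∧ o.IsSink s ∧ o₁.dir = fireDir s o.dir ∧ FireSeq o₁ l o'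

end EdgeOrientation

/-- The trunk (2-core) of a graph: the set of vertices surviving iterated deletion of
leaves, i.e. the vertices belonging to some set of vertices within which every vertex
has at least two neighbours. The trunk edges are exactly the edges with both endpoints
in the trunk; the remaining edges are the limb edges. -/
def SimpleGraph.trunk {V : Type*} (G : SimpleGraph V) : Set V :=
  {v | ∃ A : Set V, v ∈ A ∧
    ∀ u ∈ A, ∃ x ∈ A, ∃ y ∈ A, x ≠ y ∧ G.Adj u x ∧ G.Adj u y}

/-!
Every vertex of a cycle, directed or not, has two distinct neighbours on that cycle, so it lies
in the trunk. Hence a directed cycle of the new orientation runs through trunk edges only and is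
a directed cycle of the old one, and every limb edge is a bridge.

A limb edge `u → v` is reversed by firing the component `C` of `v` in `G` minus that edge. No
edge leaves `C`, so `C` always contains a sink of the current orientation and can be fired one
vertex at a time; the net effect reverses exactly the edges between `C` and its complement,
and `uv` is the only such edge.
-/

namespace SimpleGraph

variable {V : Type*} {G : SimpleGraph V}

theorem mem_trunk_of_transGen {d : V → V → Prop} (hadj : ∀ x y, d x y → G.Adj x y)
    (hanti : ∀ x y, d x y → ¬ d y x) {u v : V}
    (hvu : Relation.TransGen d v u) (huv : Relation.TransGen d u v) : u ∈ G.trunk := by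
  have hvv : Relation.TransGen d v v := hvu.trans huv
  refine ⟨{w | Relation.TransGen d v w ∧ Relation.TransGen d w v}, ⟨hvu, huv⟩, ?_⟩
  rintro w ⟨hvw, hwv⟩
  obtain ⟨x, hwx, hxv⟩ := Relation.TransGen.head'_iff.mp hwv
  obtain ⟨y, hvy, hyw⟩ := Relation.TransGen.tail'_iff.mp hvw
  refine ⟨x, ⟨hvw.tail hwx, .trans_right hxv hvv⟩, y, ⟨.trans_left hvv hvy, .head hyw hwv⟩,
    ?_, hadj _ _ hwx, (hadj _ _ hyw).symm⟩
  rintro rfl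
  exact hanti _ _ hwx hyw

theorem Walk.IsCycle.mem_trunk {u x : V} {p : G.Walk u u} (hp : p.IsCycle)
    (hx : x ∈ p.support) : x ∈ G.trunk := by
  refine ⟨{y | y ∈ p.support}, hx, fun w hw => ?_⟩
  obtain ⟨a, b, hab, hnb⟩ := Set.ncard_eq_two.1 (hp.ncard_neighborSet_toSubgraph_eq_two hw)
  have ha : p.toSubgraph.Adj w a := by
    rw [← Subgraph.mem_neighborSet, hnb]
    exact Set.mem_insert a {b}
  have hb : p.toSubgraph.Adj w b := by
    rw [← Subgraph.mem_neighborSet, hnb]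
    exact Set.mem_insert_of_mem a rfl
  exact ⟨a, p.mem_verts_toSubgraph.1 ha.symm.fst_mem, b, p.mem_verts_toSubgraph.1 hb.symm.fst_mem,
    hab, ha.adj_sub, hb.adj_sub⟩

theorem mem_trunk_of_not_isBridge {u v : V} (huv : G.Adj u v) (hb : ¬ G.IsBridge s(u, v)) :
    u ∈ G.trunk ∧ v ∈ G.trunk := by
  rw [isBridge_iff, not_not] at hb
  obtain ⟨w, p, hp, he⟩ := adj_and_reachable_delete_edges_iff_exists_cycle.1 ⟨huv, hb⟩
  exact ⟨hp.mem_trunk (p.fst_mem_support_of_mem_edges he),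
    hp.mem_trunk (p.snd_mem_support_of_mem_edges he)⟩

end SimpleGraph

namespace EdgeOrientation

open Relation

variable {V : Type*} {G : SimpleGraph V}

@[ext]
theorem ext {o₁ o₂ : EdgeOrientation G} (h : o₁.dir = o₂.dir) : o₁ = o₂ := by
  cases o₁
  cases o₂
  subst h
  rfl

theorem not_dir_of_dir (o : EdgeOrientation G) {x y : V} (h : o.dir x y) : ¬ o.dir y x :=
  (o.dir_total x y (o.dir_adj x y h)).1 h

theorem dir_of_not_dir (o : EdgeOrientation G) {x y : V} (hadj : G.Adj x y)
    (h : ¬ o.dir x y) : o.dir y x :=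
  not_not.1 fun h' => h ((o.dir_total x y hadj).2 h')

theorem eq_of_dir_imp {o o' : EdgeOrientation G} (h : ∀ x y, o.dir x y → o'.dir x y) :
    o = o' := by
  ext x y
  refine ⟨h x y, fun h' => not_not.1 fun hn => ?_⟩
  exact o'.not_dir_of_dir h' (h y x (o.dir_of_not_dir (o'.dir_adj x y h') hn))

theorem Acyclic.of_agree_on_trunk {o o' : EdgeOrientation G} (ho : o.Acyclic)
    (hagree : ∀ u v, u ∈ G.trunk → v ∈ G.trunk → (o'.dir u v ↔ o.dir u v)) :
    o'.Acyclic := by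
  intro v hv
  have mem : ∀ {x y}, TransGen o'.dir x y → TransGen o'.dir y x → y ∈ G.trunk :=
    SimpleGraph.mem_trunk_of_transGen o'.dir_adj fun _ _ => o'.not_dir_of_dir
  suffices ∀ u, TransGen o'.dir v u → TransGen o'.dir u v → TransGen o.dir v u from
    ho v (this v hv hv)
  intro u hvu huv
  induction hvu with
  | single h => exact .single ((hagree _ _ (mem huv (.single h)) (mem (.single h) huv)).1 h)
  | @tail b c hvb hbc ih =>
    have hbv : TransGen o'.dir b v := .head hbc huv
    exact (ih hbv).tail ((hagree b c (mem hvb hbv) (mem (hvb.tail hbc) huv)).1 hbc)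

theorem FireStep.acyclic {o o' : EdgeOrientation G} (h : FireStep o o') : o'.Acyclic := by
  obtain ⟨ho, s, hs, hdir⟩ := h
  have not_into_s : ∀ x, ¬ o'.dir x s := by
    rw [hdir]
    rintro x (⟨_, h⟩ | ⟨hne, _⟩)
    · exact hs x h
    · exact hne (Or.inr rfl)
  have dir_of_ne : ∀ x y, x ≠ s → o'.dir x y → o.dir x y := by
    rw [hdir]
    rintro x y hx (⟨rfl | rfl, h⟩ | ⟨_, h⟩)
    exacts [absurd rfl hx, absurd h (hs x), h]
  have target_ne : ∀ {x y}, TransGen o'.dir x y → y ≠ s := fun hxy hy => by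
    obtain ⟨_, _, h⟩ := TransGen.tail'_iff.1 hxy
    exact not_into_s _ (hy ▸ h)
  have transGen_of_ne : ∀ x y, x ≠ s → TransGen o'.dir x y → TransGen o.dir x y := by
    intro x y hx hxy
    induction hxy with
    | single h => exact .single (dir_of_ne _ _ hx h)
    | tail hxb hbc ih => exact ih.tail (dir_of_ne _ _ (target_ne hxb) hbc)
  intro v hv
  exact ho v (transGen_of_ne v v (target_ne hv) hv)

theorem Reach.acyclic {o o' : EdgeOrientation G} (ho : o.Acyclic) (h : Reach o o') :
    o'.Acyclic := by
  induction h with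
  | refl => exact ho
  | tail _ hstep _ => exact hstep.acyclic

theorem exists_sink [Finite V] {o : EdgeOrientation G} (ho : o.Acyclic) (x : V) :
    ∃ s, ReflTransGen o.dir x s ∧ o.IsSink s := by
  let r : V → V → Prop := fun a b => TransGen o.dir b a
  have : IsTrans V r := ⟨fun _ _ _ hab hbc => hbc.trans hab⟩
  have : Std.Irrefl r := ⟨ho⟩
  obtain ⟨s, hxs, hmin⟩ :=
    (Finite.wellFounded_of_trans_of_irrefl r).has_min {s | ReflTransGen o.dir x s} ⟨x, .refl⟩
  exact ⟨s, hxs, fun t hst => hmin t (hxs.tail hst) (.single hst)⟩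

def reverseCut (o : EdgeOrientation G) (F : Set V) : EdgeOrientation G where
  dir x y := (o.dir x y ∧ (x ∈ F ↔ y ∈ F)) ∨ (o.dir y x ∧ ¬(x ∈ F ↔ y ∈ F))
  dir_adj := by
    rintro x y (⟨h, _⟩ | ⟨h, _⟩)
    exacts [o.dir_adj _ _ h, (o.dir_adj _ _ h).symm]
  dir_total x y hadj := by
    have := o.dir_total x y hadj
    tauto

section reverseCut

variable (o : EdgeOrientation G) {F : Set V} {x y : V}

theorem reverseCut_dir_of_iff (h : x ∈ F ↔ y ∈ F) : (o.reverseCut F).dir x y ↔ o.dir x y := by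
  simp only [reverseCut, h, and_true, not_true_eq_false, and_false, or_false]

theorem reverseCut_dir_of_not_iff (h : ¬(x ∈ F ↔ y ∈ F)) :
    (o.reverseCut F).dir x y ↔ o.dir y x := by
  simp only [reverseCut, h, and_false, false_or, not_false_eq_true, and_true]

theorem reverseCut_empty : o.reverseCut ∅ = o :=
  ext <| funext₂ fun _ _ => propext <| o.reverseCut_dir_of_iff Iff.rfl

theorem reverseCut_reverseCut (A B : Set V) :
    (o.reverseCut A).reverseCut B = o.reverseCut (symmDiff A B) := by
  ext x y
  simp only [reverseCut, Set.mem_symmDiff]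
  by_cases hxA : x ∈ A <;> by_cases hyA : y ∈ A <;> by_cases hxB : x ∈ B <;>
    by_cases hyB : y ∈ B <;> simp [hxA, hyA, hxB, hyB]

theorem reverseCut_singleton_dir (s : V) : (o.reverseCut {s}).dir = fireDir s o.dir := by
  funext x y
  apply propext
  have hloop : ¬ o.dir s s := fun h => (o.dir_adj s s h).ne rfl
  by_cases hx : x = s <;> by_cases hy : y = s <;> simp [reverseCut, fireDir, hx, hy, hloop]

end reverseCut

theorem reach_reverseCut [Finite V] {o : EdgeOrientation G} (ho : o.Acyclic) {C : Set V}
    (hC : ∀ x ∈ C, ∀ y, o.dir x y → y ∈ C) : Reach o (o.reverseCut C) := by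
  induction h : C.ncard generalizing o C with
  | zero =>
    rw [(Set.ncard_eq_zero).1 h, reverseCut_empty]
    exact .refl
  | succ n ih =>
    obtain ⟨x, hx⟩ := Set.nonempty_of_ncard_ne_zero (by rw [h]; exact n.succ_ne_zero)
    obtain ⟨w, hxw, hw⟩ := exists_sink ho x
    have hwC : w ∈ C := by
      clear hw
      induction hxw with
      | refl => exact hx
      | tail _ hab ih => exact hC _ ih _ hab
    have hstep : FireStep o (o.reverseCut {w}) := ⟨ho, w, hw, o.reverseCut_singleton_dir w⟩
    have hC' : ∀ x ∈ C \ {w}, ∀ y, (o.reverseCut {w}).dir x y → y ∈ C \ {w} := by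
      rintro x ⟨hxC, hxne⟩ y hxy
      by_cases hyw : y = w
      · subst hyw
        exact absurd ((o.reverseCut_dir_of_not_iff (by simpa using hxne)).1 hxy) (hw x)
      · have hy : y ∉ ({w} : Set V) := hyw
        exact ⟨hC x hxC y ((o.reverseCut_dir_of_iff (iff_of_false hxne hy)).1 hxy), hy⟩
    have hrest := ih hstep.acyclic hC' (by rw [Set.ncard_sdiff_singleton_of_mem hwC, h]; rfl)
    have hcut : symmDiff {w} (C \ {w}) = C := by
      rw [Set.disjoint_sdiff_right.symmDiff_eq_sup]
      exact Set.union_sdiff_cancel (Set.singleton_subset_iff.2 hwC)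
    rw [reverseCut_reverseCut, hcut] at hrest
    exact .head hstep hrest

theorem exists_reach_reverse_bridge [Finite V] {o : EdgeOrientation G} (ho : o.Acyclic)
    {u v : V} (huv : o.dir u v) (hb : G.IsBridge s(u, v)) :
    ∃ o₂, Reach o o₂ ∧ o₂.dir v u ∧ ∀ x y, s(x, y) ≠ s(u, v) → (o₂.dir x y ↔ o.dir x y) := by
  set C : Set V := {x | (G.deleteEdges {s(u, v)}).Reachable v x}
  have hvC : v ∈ C := .refl v
  have huC : u ∉ C := fun h => SimpleGraph.isBridge_iff.1 hb h.symm
  have hcut : ∀ x y, G.Adj x y → s(x, y) ≠ s(u, v) → (x ∈ C ↔ y ∈ C) := fun x y hxy hne =>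
    have hxy' : (G.deleteEdges {s(u, v)}).Adj x y := SimpleGraph.deleteEdges_adj.2 ⟨hxy, hne⟩
    ⟨fun hx => hx.trans hxy'.reachable, fun hy => hy.trans hxy'.symm.reachable⟩
  have hC : ∀ x ∈ C, ∀ y, o.dir x y → y ∈ C := by
    intro x hx y hxy
    by_cases hne : s(x, y) = s(u, v)
    · rcases Sym2.eq_iff.1 hne with ⟨rfl, rfl⟩ | ⟨rfl, rfl⟩
      · exact absurd hx huC
      · exact absurd hxy (o.not_dir_of_dir huv)
    · exact (hcut x y (o.dir_adj x y hxy) hne).1 hx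
  refine ⟨o.reverseCut C, reach_reverseCut ho hC,
    (o.reverseCut_dir_of_not_iff (by simp [hvC, huC])).2 huv, fun x y hne => ?_⟩
  by_cases hadj : G.Adj x y
  · exact o.reverseCut_dir_of_iff (hcut x y hadj hne)
  · exact iff_of_false (fun h => hadj ((o.reverseCut C).dir_adj x y h))
      (fun h => hadj (o.dir_adj x y h))

theorem Reach.of_agree_on_trunk [Finite V] {o o' : EdgeOrientation G} (ho : o.Acyclic)
    (hagree : ∀ u v, u ∈ G.trunk → v ∈ G.trunk → (o'.dir u v ↔ o.dir u v)) :
    Reach o o' := by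
  induction h : {p : V × V | o.dir p.1 p.2 ∧ ¬ o'.dir p.1 p.2}.ncard
    using Nat.strong_induction_on generalizing o with
  | _ n ih =>
  by_cases hsub : ∀ x y, o.dir x y → o'.dir x y
  · rw [eq_of_dir_imp hsub]
    exact .refl
  push Not at hsub
  obtain ⟨u, v, huv, hnuv⟩ := hsub
  have hlimb : u ∈ G.trunk → v ∉ G.trunk := fun hu hv => hnuv ((hagree u v hu hv).2 huv)
  have hb : G.IsBridge s(u, v) := by
    by_contra hb
    obtain ⟨hu, hv⟩ := SimpleGraph.mem_trunk_of_not_isBridge (o.dir_adj u v huv) hb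
    exact hlimb hu hv
  obtain ⟨o₂, hreach, hvu, hrest⟩ := exists_reach_reverse_bridge ho huv hb
  have hne : ∀ x y, x ∈ G.trunk → y ∈ G.trunk → s(x, y) ≠ s(u, v) := by
    intro x y hx hy hxy
    rcases Sym2.eq_iff.1 hxy with ⟨rfl, rfl⟩ | ⟨rfl, rfl⟩
    exacts [hlimb hx hy, hlimb hy hx]
  have hlt : {p : V × V | o₂.dir p.1 p.2 ∧ ¬ o'.dir p.1 p.2}.ncard < n := by
    rw [← h]
    refine (Set.ncard_le_ncard ?_).trans_lt
      (Set.ncard_sdiff_singleton_lt_of_mem (a := (u, v)) ⟨huv, hnuv⟩)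
    rintro ⟨x, y⟩ ⟨hxy, hnxy⟩
    by_cases he : s(x, y) = s(u, v)
    · rcases Sym2.eq_iff.1 he with ⟨rfl, rfl⟩ | ⟨rfl, rfl⟩
      · exact absurd hvu (o₂.not_dir_of_dir hxy)
      · exact absurd (o'.dir_of_not_dir (o.dir_adj _ _ huv) hnuv) hnxy
    · refine ⟨⟨(hrest x y he).1 hxy, hnxy⟩, fun hxy' => he ?_⟩
      obtain ⟨rfl, rfl⟩ := Prod.mk.inj hxy'
      rfl
  refine hreach.trans (ih _ hlt (hreach.acyclic ho) (fun x y hx hy => ?_) rfl)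
  rw [hrest x y (hne x y hx hy)]
  exact hagree x y hx hy

end EdgeOrientation

open EdgeOrientation in
theorem limb_redirection_general {V : Type*} [Fintype V] {G : SimpleGraph V}
    (o o' : EdgeOrientation G) (hacyc : o.Acyclic)
    (hagree : ∀ u v, u ∈ G.trunk → v ∈ G.trunk → (o'.dir u v ↔ o.dir u v)) :
    o'.Acyclic ∧ Reach o o' :=
  ⟨hacyc.of_agree_on_trunk hagree, .of_agree_on_trunk hacyc hagree⟩

open EdgeOrientation in
/-- If, in an acyclic edge orientation of a finite connected graph, the orientations of
the limb edges (edges not in the trunk) are changed arbitrarily, the resulting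
orientation is still acyclic and lies in the same reachability class under sink firing. -/
theorem limb_redirection {V : Type*} [Fintype V] {G : SimpleGraph V}
    (hconn : G.Connected) (o o' : EdgeOrientation G) (hacyc : o.Acyclic)
    (hagree : ∀ u v, u ∈ G.trunk → v ∈ G.trunk → (o'.dir u v ↔ o.dir u v)) :
    o'.Acyclic ∧ Reach o o' :=
  limb_redirection_general o o' hacyc hagree
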